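/- arXiv:1905.09641 — 2 statements merged into one kernel-verified Lean document; each statement's English description precedes it below -/
import Mathlib

section
/- Let m_k > m_{k-1} > ... > m_1 be a decreasing sequence of non-zero integers, let N_1 = sum_{j=1}^k 2^{m_j} and N_2 = N_1 + 2^{m_0} with m_0 ≤ m_1. Then the segment {S_2(N_1), ..., S_2(N_2 - 1)} of the van der Corput sequence equals the set {S_2(0), ..., S_2(2^{m_0} - 1)} translated by sum_{j=1}^k 1/2^{m_j+1}. -/
/-- The binary radical inverse function (van der Corput sequence). -/
noncomputable def S2 (n : ℕ) : ℝ := ∑' j : ℕ, ((n / 2 ^ j % 2 : ℕ) : ℝ) / 2 ^ (j + 1)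

lemma digit_add {c N n : ℕ} (hN : 2 ^ c ∣ N) (hn : n < 2 ^ c) (j : ℕ) :
    (N + n) / 2 ^ j % 2 = N / 2 ^ j % 2 + n / 2 ^ j % 2 := by
  obtain ⟨M, rfl⟩ := hN
  rcases lt_or_ge j c with h | h
  · have h1 : 2 ^ c * M = 2 ^ j * (2 * (2 ^ (c - j - 1) * M)) := by
      obtain ⟨d, rfl⟩ : ∃ d, c = j + d + 1 := ⟨c - j - 1, by omega⟩
      rw [show j + d + 1 - j - 1 = d by omega, pow_add, pow_add, pow_one]; ring
    rw [h1, Nat.mul_add_div (by positivity), Nat.mul_div_cancel_left _ (by positivity),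
      Nat.mul_add_mod, Nat.mul_mod_right, Nat.zero_add]
  · have hj : (2 : ℕ) ^ j = 2 ^ c * 2 ^ (j - c) := by rw [← pow_add]; congr 1; omega
    have hn' : n < 2 ^ j := lt_of_lt_of_le hn (Nat.pow_le_pow_right (by norm_num) h)
    rw [hj, ← Nat.div_div_eq_div_mul, ← Nat.div_div_eq_div_mul,
      Nat.mul_add_div (by positivity), Nat.div_eq_of_lt hn,
      Nat.mul_div_cancel_left _ (by positivity : (0:ℕ) < 2 ^ c)]
    rw [hj] at hn'
    rw [Nat.div_eq_of_lt hn', Nat.add_zero]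
    simp

lemma digit_two_pow (a j : ℕ) : 2 ^ a / 2 ^ j % 2 = if j = a then 1 else 0 := by
  rcases lt_trichotomy j a with h | rfl | h
  · have : (2 : ℕ) ^ a = 2 ^ j * (2 * 2 ^ (a - j - 1)) := by
      obtain ⟨d, rfl⟩ : ∃ d, a = j + d + 1 := ⟨a - j - 1, by omega⟩
      rw [show j + d + 1 - j - 1 = d by omega, pow_add, pow_add, pow_one]; ring
    rw [this, Nat.mul_div_cancel_left _ (by positivity), Nat.mul_mod_right,
      if_neg (by omega)]
  · rw [Nat.div_self (by positivity), if_pos rfl]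
  · rw [Nat.div_eq_of_lt (Nat.pow_lt_pow_right (by norm_num) h), if_neg (by omega),
      Nat.zero_mod]

lemma summable_S2 (n : ℕ) :
    Summable (fun j : ℕ => ((n / 2 ^ j % 2 : ℕ) : ℝ) / 2 ^ (j + 1)) := by
  apply Summable.of_nonneg_of_le (fun j => by positivity)
    (fun j => ?_) summable_geometric_two
  have h1 : ((n / 2 ^ j % 2 : ℕ) : ℝ) ≤ 1 := by
    have := Nat.mod_lt (n / 2 ^ j) (show 0 < 2 by norm_num)
    exact_mod_cast Nat.lt_succ_iff.mp this
  calc ((n / 2 ^ j % 2 : ℕ) : ℝ) / 2 ^ (j + 1) ≤ 1 / 2 ^ (j + 1) := by gcongr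
    _ ≤ 1 / 2 ^ j := by gcongr <;> norm_num
    _ = (1 / 2 : ℝ) ^ j := by rw [div_pow, one_pow]

lemma S2_zero : S2 0 = 0 := by simp [S2]

lemma S2_two_pow (a : ℕ) : S2 (2 ^ a) = 1 / 2 ^ (a + 1) := by
  unfold S2
  rw [tsum_eq_single a]
  · rw [digit_two_pow, if_pos rfl, Nat.cast_one]
  · intro j hj
    rw [digit_two_pow, if_neg hj, Nat.cast_zero, zero_div]

lemma S2_add {c N n : ℕ} (hN : 2 ^ c ∣ N) (hn : n < 2 ^ c) :
    S2 (N + n) = S2 N + S2 n := by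
  unfold S2
  rw [← Summable.tsum_add (summable_S2 N) (summable_S2 n)]
  exact tsum_congr fun j => by rw [digit_add hN hn, Nat.cast_add, add_div]

lemma S2_sum : ∀ (k : ℕ) (m : Fin k → ℕ), StrictMono m →
    S2 (∑ i, 2 ^ m i) = ∑ i, (1 : ℝ) / 2 ^ (m i + 1) := by
  intro k
  induction k with
  | zero => intro m _; simp [S2_zero]
  | succ k ih =>
    intro m hm
    rw [Fin.sum_univ_succ, Fin.sum_univ_succ, add_comm ((2:ℕ) ^ m 0)]
    have hdvd : 2 ^ (m 0 + 1) ∣ ∑ i : Fin k, 2 ^ m i.succ :=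
      Finset.dvd_sum fun i _ => pow_dvd_pow 2 (hm (Fin.succ_pos i))
    have hlt : 2 ^ m 0 < 2 ^ (m 0 + 1) := Nat.pow_lt_pow_right (by norm_num) (by omega)
    rw [S2_add hdvd hlt, ih _ (fun a b hab => hm (Fin.succ_lt_succ_iff.mpr hab)),
      S2_two_pow, add_comm]

theorem vdc_self_similar (k : ℕ) (m : Fin k → ℕ) (hmono : StrictMono m)
    (hpos : ∀ i, 1 ≤ m i) (m0 : ℕ) (hm0 : ∀ i, m0 ≤ m i) :
    S2 '' Set.Ico (∑ i, 2 ^ m i) ((∑ i, 2 ^ m i) + 2 ^ m0)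
      = (fun x : ℝ => x + ∑ i, (1 : ℝ) / 2 ^ (m i + 1)) '' (S2 '' Set.Ico 0 (2 ^ m0)) := by
  set N := ∑ i, 2 ^ m i with hNdef
  have hdvd : 2 ^ m0 ∣ N := Finset.dvd_sum fun i _ => pow_dvd_pow 2 (hm0 i)
  have h1 : Set.Ico N (N + 2 ^ m0) = (fun t => N + t) '' Set.Ico 0 (2 ^ m0) := by
    rw [Set.image_const_add_Ico, Nat.add_zero]
  rw [h1, Set.image_image, Set.image_image]
  apply Set.image_congr
  intro t ht
  rw [S2_add hdvd ht.2, S2_sum k m hmono, add_comm]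
end

section
/- If f : ℝ/ℤ → ℝ is continuous with mean zero, absolutely convergent Fourier series, and f̂(k) ≥ c k^{-2} for all k ≠ 0 with c > 0, then for any points x_1, ..., x_N with sum_{m,n=1}^N f({x_m - x_n}) ≤ N f(0), one has sum_{k≠0} k^{-2} |N^{-1} sum_{m=1}^N e^{2πik x_m}|² ≤ f(0)/(cN). -/
/-!
Since `f̂` is absolutely summable, Fourier inversion holds pointwise and turns the energy
`∑_{m,n} f(x_m - x_n)` into `∑_k f̂(k) |S_k|²` with `S_k = ∑_m e(k x_m)`. The term `k = 0`
vanishes because `f` has mean zero, and every other term is at least `c k⁻² |S_k|²`, so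
`c ∑_{k ≠ 0} k⁻² |S_k|² ≤ N f(0)`; dividing by `c N²` gives the bound.
-/

open scoped Real ComplexOrder

open Complex Finset ComplexConjugate

lemma Function.Periodic.map_fract {R β : Type*} [Ring R] [LinearOrder R] [FloorRing R]
    {f : R → β} (hf : Function.Periodic f 1) (y : R) : f (Int.fract y) = f y := by
  rw [← Int.self_sub_floor]
  simpa only [mul_one] using hf.sub_int_mul_eq (x := y) ⌊y⌋

section PeriodicLift

variable {E : Type*} [TopologicalSpace E] {f : ℝ → E} {T : ℝ}

def Function.Periodic.liftContinuousMap (hf : Function.Periodic f T) (hcont : Continuous f) :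
    C(AddCircle T, E) :=
  ⟨hf.lift, isQuotientMap_quotient_mk'.continuous_iff.mpr hcont⟩

@[simp]
lemma Function.Periodic.coe_liftContinuousMap (hf : Function.Periodic f T)
    (hcont : Continuous f) : ⇑(hf.liftContinuousMap hcont) = hf.lift :=
  rfl

end PeriodicLift

lemma fourier_coe_apply_one (k : ℤ) (y : ℝ) :
    fourier k (y : AddCircle (1 : ℝ)) = exp (2 * π * I * k * y) := by
  rw [fourier_coe_apply, ofReal_one, div_one]

lemma fourier_sub_apply {T : ℝ} (k : ℤ) (x y : AddCircle T) :
    fourier k (x - y) = fourier k x * conj (fourier k y) := by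
  simp only [fourier_apply]
  rw [smul_sub, sub_eq_add_neg, AddCircle.toCircle_add, AddCircle.toCircle_neg, Circle.coe_mul,
    Circle.coe_inv_eq_conj]

lemma fourierCoeff_periodic_lift_one {g : ℝ → ℂ} (hg : Function.Periodic g 1) (k : ℤ) :
    fourierCoeff hg.lift k = ∫ t in (0 : ℝ)..1, g t * exp (-(2 * π * I * k * t)) := by
  have : Fact ((0 : ℝ) < 1) := ⟨one_pos⟩
  rw [fourierCoeff_eq_intervalIntegral _ k 0, one_div_one, one_smul, zero_add]
  refine intervalIntegral.integral_congr fun t _ => ?_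
  rw [smul_eq_mul, fourier_coe_apply_one, Function.Periodic.lift_coe, mul_comm]
  push_cast
  ring_nf

section Energy

variable {T : ℝ} [Fact (0 < T)] {ι : Type*}

theorem hasSum_fourierCoeff_mul_norm_sum_fourier_sq {F : C(AddCircle T, ℂ)}
    (hF : Summable (fourierCoeff F)) (s : Finset ι) (x : ι → AddCircle T) :
    HasSum (fun k => fourierCoeff F k * ((‖∑ m ∈ s, fourier k (x m)‖ ^ 2 : ℝ) : ℂ))
      (∑ m ∈ s, ∑ n ∈ s, F (x m - x n)) := by
  have hpair : ∀ k : ℤ, ∑ m ∈ s, ∑ n ∈ s, fourierCoeff F k • fourier k (x m - x n)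
      = fourierCoeff F k * ((‖∑ m ∈ s, fourier k (x m)‖ ^ 2 : ℝ) : ℂ) := by
    intro k
    rw [ofReal_pow, ← mul_conj', map_sum, sum_mul_sum, mul_sum]
    simp only [fourier_sub_apply, smul_eq_mul, mul_sum]
  exact (hasSum_sum fun m _ => hasSum_sum fun n _ =>
    has_pointwise_sum_fourier_series_of_summable hF (x m - x n)).congr_fun fun k => (hpair k).symm

theorem hasSum_re_fourierCoeff_mul_norm_sum_fourier_sq {f : ℝ → ℝ}
    (hf : Function.Periodic f T) (hcont : Continuous f)
    (hsum : Summable (fourierCoeff (hf.comp ofReal).lift)) (s : Finset ι) (x : ι → ℝ) :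
    HasSum (fun k => (fourierCoeff (hf.comp ofReal).lift k).re
        * ‖∑ m ∈ s, fourier k (x m : AddCircle T)‖ ^ 2)
      (∑ m ∈ s, ∑ n ∈ s, f (x m - x n)) := by
  have h := hasSum_re <| hasSum_fourierCoeff_mul_norm_sum_fourier_sq
    (F := (hf.comp ofReal).liftContinuousMap (continuous_ofReal.comp hcont)) hsum s
    (fun m => (x m : AddCircle T))
  simpa only [re_mul_ofReal, ← QuotientAddGroup.mk_sub, re_sum,
    Function.Periodic.coe_liftContinuousMap, Function.Periodic.lift_coe, Function.comp_apply,
    ofReal_re] using h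

end Energy

lemma tsum_subtype_le_of_hasSum {α : Type*} {p : α → Prop} {g h : α → ℝ} {E : ℝ}
    (hg : HasSum g E) (hg_nonneg : ∀ k, 0 ≤ g k) (hh_nonneg : ∀ k, p k → 0 ≤ h k)
    (hhg : ∀ k, p k → h k ≤ g k) :
    ∑' k : {k // p k}, h k ≤ E :=
  have hg_sub : Summable fun k : {k // p k} => g k := hg.summable.subtype {k | p k}
  calc ∑' k : {k // p k}, h k ≤ ∑' k : {k // p k}, g k :=
        Summable.tsum_le_tsum (fun k => hhg k k.2)
          (.of_nonneg_of_le (fun k => hh_nonneg k k.2) (fun k => hhg k k.2) hg_sub) hg_sub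
    _ ≤ ∑' k, g k := hg.summable.tsum_subtype_le g {k | p k} hg_nonneg
    _ = E := hg.tsum_eq

lemma tsum_ne_zero_one_div_sq_mul_le {a w : ℤ → ℝ} {E c : ℝ} (hc : 0 < c)
    (hE : HasSum (fun k => a k * w k) E) (hw : ∀ k, 0 ≤ w k) (ha0 : 0 ≤ a 0)
    (ha : ∀ k : ℤ, k ≠ 0 → c / (k : ℝ) ^ 2 ≤ a k) :
    ∑' k : {k : ℤ // k ≠ 0}, 1 / (k : ℝ) ^ 2 * w k ≤ E / c := by
  have ha_nonneg : ∀ k, 0 ≤ a k := fun k => by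
    rcases eq_or_ne k 0 with rfl | hk
    · exact ha0
    · exact (ha k hk).trans' (by positivity)
  refine tsum_subtype_le_of_hasSum (h := fun k : ℤ => 1 / (k : ℝ) ^ 2 * w k) (hE.div_const c)
    (fun k => div_nonneg (mul_nonneg (ha_nonneg k) (hw k)) hc.le)
    (fun k _ => mul_nonneg (by positivity) (hw k)) fun k hk => ?_
  rw [le_div_iff₀ hc, mul_right_comm, one_div_mul_eq_div]
  exact mul_le_mul_of_nonneg_right (ha k hk) (hw k)

theorem weyl_sum_bound_general (f : ℝ → ℝ) (hper : Function.Periodic f 1)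
    (hcont : Continuous f) (hmean : ∫ x in (0 : ℝ)..1, f x = 0)
    (habs : Summable fun k : ℤ =>
      ‖∫ t in (0 : ℝ)..1, (f t : ℂ) * Complex.exp (-(2 * π * Complex.I * k * t))‖)
    (c : ℝ) (hc : 0 < c)
    (hfourier : ∀ k : ℤ, k ≠ 0 →
      (c / (k : ℂ) ^ 2 : ℂ)
        ≤ ∫ t in (0 : ℝ)..1, (f t : ℂ) * Complex.exp (-(2 * π * Complex.I * k * t)))
    (N : ℕ) (x : ℕ → ℝ)
    (henergy : ∑ m ∈ Finset.range N, ∑ n ∈ Finset.range N, f (Int.fract (x m - x n))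
      ≤ (N : ℝ) * f 0) :
    ∑' k : {k : ℤ // k ≠ 0},
        (1 : ℝ) / ((k : ℤ) : ℝ) ^ 2
          * ‖(1 : ℂ) / N * ∑ m ∈ Finset.range N, Complex.exp (2 * π * Complex.I * (k : ℤ) * x m)‖ ^ 2
      ≤ f 0 / (c * N) := by
  have : Fact ((0 : ℝ) < 1) := ⟨one_pos⟩
  set a := fourierCoeff (hper.comp ofReal).lift
  have ha : ∀ k : ℤ, a k = ∫ t in (0 : ℝ)..1, (f t : ℂ) * exp (-(2 * π * I * k * t)) :=
    fourierCoeff_periodic_lift_one _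
  have hsum : Summable a := .of_norm (by simpa only [ha] using habs)
  set S : ℤ → ℂ := fun k => ∑ m ∈ range N, exp (2 * π * I * k * x m)
  have hE : HasSum (fun k => (a k).re * ‖S k‖ ^ 2)
      (∑ m ∈ range N, ∑ n ∈ range N, f (Int.fract (x m - x n))) := by
    simpa only [hper.map_fract, fourier_coe_apply_one] using
      hasSum_re_fourierCoeff_mul_norm_sum_fourier_sq hper hcont hsum (range N) x
  have ha0 : (a 0).re = 0 := by simp [ha, intervalIntegral.integral_ofReal, hmean]
  have ha_lower (k : ℤ) (hk : k ≠ 0) : c / (k : ℝ) ^ 2 ≤ (a k).re := by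
    rw [ha]
    have h := (le_def.mp (hfourier k hk)).1
    simpa [← ofReal_intCast, ← ofReal_pow, ← ofReal_div] using h
  have hS := tsum_ne_zero_one_div_sq_mul_le hc hE (fun _ => by positivity) ha0.ge ha_lower
  calc _ = (1 / (N : ℝ)) ^ 2 *
          ∑' k : {k : ℤ // k ≠ 0}, 1 / (k : ℝ) ^ 2 * ‖S k‖ ^ 2 := by
        rw [← tsum_mul_left]
        refine tsum_congr fun k => ?_
        simp only [S, norm_mul, mul_pow, norm_div, norm_one, Complex.norm_natCast]
        ring
    _ ≤ (1 / (N : ℝ)) ^ 2 * (N * f 0 / c) := by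
        gcongr
        exact hS.trans (div_le_div_of_nonneg_right henergy hc.le)
    _ = f 0 / (c * N) := by
        rcases eq_or_ne (N : ℝ) 0 with hN | hN
        · simp [hN]
        · field_simp

theorem weyl_sum_bound (f : ℝ → ℝ) (hper : Function.Periodic f 1)
    (hcont : Continuous f) (hmean : ∫ x in (0 : ℝ)..1, f x = 0)
    (habs : Summable fun k : ℤ =>
      ‖∫ t in (0 : ℝ)..1, (f t : ℂ) * Complex.exp (-(2 * π * Complex.I * k * t))‖)
    (c : ℝ) (hc : 0 < c)
    (hfourier : ∀ k : ℤ, k ≠ 0 →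
      (c / (k : ℂ) ^ 2 : ℂ)
        ≤ ∫ t in (0 : ℝ)..1, (f t : ℂ) * Complex.exp (-(2 * π * Complex.I * k * t)))
    (N : ℕ) (hN : 1 ≤ N) (x : ℕ → ℝ)
    (henergy : ∑ m ∈ Finset.range N, ∑ n ∈ Finset.range N, f (Int.fract (x m - x n))
      ≤ (N : ℝ) * f 0) :
    ∑' k : {k : ℤ // k ≠ 0},
        (1 : ℝ) / ((k : ℤ) : ℝ) ^ 2
          * ‖(1 : ℂ) / N * ∑ m ∈ Finset.range N, Complex.exp (2 * π * Complex.I * (k : ℤ) * x m)‖ ^ 2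
      ≤ f 0 / (c * N) :=
  weyl_sum_bound_general f hper hcont hmean habs c hc hfourier N x henergy
end
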